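/- For every integer k ≥ 1, every μ > 0 and every x ≥ 0, |H_k(μx) - H_k(x)| ≤ |μ - 1| · K(k)^2 · max(1, μ^{-1}) · k^{1/2}. -/

import Mathlib

open MeasureTheory Real Filter Set

noncomputable section

/-- `Hcdf k` : the Gamma(k,1) distribution function. -/
def Hcdf (k : ℕ) (x : ℝ) : ℝ :=
  ∫ t in (0:ℝ)..x, t ^ (k - 1) * Real.exp (-t) / (Nat.factorial (k - 1))

/-- `Kconst k = (k^{k+1/2} e^{-k}/k!)^{1/2}`. -/
def Kconst (k : ℕ) : ℝ :=
  Real.sqrt ((k : ℝ) ^ ((k : ℝ) + 1 / 2) * Real.exp (-(k : ℝ)) / (Nat.factorial k))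

/-!
`H_k(μx) - H_k(x)` is the integral of the density `h_k` between `x` and `μx`. Since `t ↦ t^k e^{-t}`
is maximal at `t = k`, we have `t · h_k(t) ≤ k^k e^{-k} / (k-1)! = K(k)² √k`, so on that interval
`h_k ≤ K(k)² √k / min(x, μx)`, and the interval has length `|μ - 1| x = |μ - 1| · max(1, μ⁻¹) · min(x, μx)`.
-/

def Hpdf (k : ℕ) (t : ℝ) : ℝ :=
  t ^ (k - 1) * exp (-t) / (k - 1).factorial

theorem continuous_Hpdf (k : ℕ) : Continuous (Hpdf k) := by
  unfold Hpdf
  fun_prop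

theorem Hcdf_sub_Hcdf (k : ℕ) (a b : ℝ) : Hcdf k b - Hcdf k a = ∫ t in a..b, Hpdf k t :=
  intervalIntegral.integral_interval_sub_left ((continuous_Hpdf k).intervalIntegrable _ _)
    ((continuous_Hpdf k).intervalIntegrable _ _)

theorem Hpdf_nonneg (k : ℕ) {t : ℝ} (ht : 0 ≤ t) : 0 ≤ Hpdf k t := by
  unfold Hpdf
  positivity

theorem pow_mul_exp_neg_le (k : ℕ) {t : ℝ} (ht : 0 ≤ t) :
    t ^ k * exp (-t) ≤ (k : ℝ) ^ k * exp (-(k : ℝ)) := by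
  rcases k.eq_zero_or_pos with rfl | hk
  · simpa using ht
  have hk : (0 : ℝ) < k := by exact_mod_cast hk
  -- `t / k ≤ e^{t/k - 1}`, raised to the `k`-th power
  have hle : (t / k) ^ k ≤ exp (t / k - 1) ^ k :=
    pow_le_pow_left₀ (by positivity) (by linarith [add_one_le_exp (t / k - 1)]) k
  have hexp : exp (t / k - 1) ^ k = exp (t - k) := by
    rw [← exp_nat_mul]
    congr 1
    field_simp
  rw [hexp, div_pow, div_le_iff₀ (by positivity), exp_sub] at hle
  rw [← le_div_iff₀ (exp_pos _), exp_neg, exp_neg]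
  calc t ^ k ≤ exp t / exp k * k ^ k := hle
    _ = _ := by field_simp

theorem mul_Hpdf_le {k : ℕ} (hk : 1 ≤ k) {t : ℝ} (ht : 0 ≤ t) :
    t * Hpdf k t ≤ (k : ℝ) ^ k * exp (-(k : ℝ)) / (k - 1).factorial := by
  have htk : t * t ^ (k - 1) = t ^ k := by rw [← pow_succ', Nat.sub_add_cancel hk]
  rw [Hpdf, ← mul_div_assoc, ← mul_assoc, htk]
  exact div_le_div_of_nonneg_right (pow_mul_exp_neg_le k ht) (by positivity)

theorem Kconst_sq_mul_sqrt {k : ℕ} (hk : 1 ≤ k) :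
    Kconst k ^ 2 * √k = (k : ℝ) ^ k * exp (-(k : ℝ)) / (k - 1).factorial := by
  have hk0 : (0 : ℝ) < k := by exact_mod_cast hk
  have hpow : (k : ℝ) ^ ((k : ℝ) + 1 / 2) = k ^ k * √k := by
    rw [rpow_add hk0, rpow_natCast, ← sqrt_eq_rpow]
  have hfac : (k.factorial : ℝ) = k * (k - 1).factorial := by
    rw [← Nat.mul_factorial_pred (by omega : k ≠ 0)]
    push_cast
    ring
  rw [Kconst, sq_sqrt (by positivity), hpow, hfac]
  field_simp
  rw [sq_sqrt hk0.le]

theorem abs_integral_scale_le {f : ℝ → ℝ} {c m x : ℝ} (hm : 0 < m) (hx : 0 < x)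
    (hf : ∀ t ∈ uIoc x (m * x), |f t| ≤ c / t) :
    |∫ t in x..m * x, f t| ≤ |m - 1| * c * max 1 m⁻¹ := by
  have hmin : 0 < min x (m * x) := lt_min hx (by positivity)
  have hbound : ∀ t ∈ uIoc x (m * x), ‖f t‖ ≤ c / min x (m * x) := by
    intro t ht
    have htpos : 0 < t := hmin.trans ht.1
    have hc : 0 ≤ c := by
      have := mul_nonneg ((abs_nonneg _).trans (hf t ht)) htpos.le
      rwa [div_mul_cancel₀ _ htpos.ne'] at this
    exact (hf t ht).trans (div_le_div_of_nonneg_left hc hmin ht.1.le)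
  have hlen : |m * x - x| = |m - 1| * x := by
    rw [← sub_one_mul, abs_mul, abs_of_pos hx]
  have hscale : x / min x (m * x) = max 1 m⁻¹ := by
    rcases le_total m 1 with h | h
    · rw [max_eq_right ((one_le_inv₀ hm).mpr h), min_eq_right (by nlinarith)]
      field_simp
    · rw [max_eq_left (inv_le_one_of_one_le₀ h), min_eq_left (by nlinarith), div_self hx.ne']
  calc |∫ t in x..m * x, f t| ≤ c / min x (m * x) * |m * x - x| :=
        intervalIntegral.norm_integral_le_of_norm_le_const hbound
    _ = |m - 1| * c * (x / min x (m * x)) := by rw [hlen]; ring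
    _ = |m - 1| * c * max 1 m⁻¹ := by rw [hscale]

/-- For every integer `k ≥ 1`, every `μ > 0` and every `x ≥ 0`,
`|H_k(μx) - H_k(x)| ≤ |μ - 1| · K(k)² · max(1, μ⁻¹) · √k`. -/
theorem abs_Hcdf_scale_sub_le (k : ℕ) (hk : 1 ≤ k) (m : ℝ) (hm : 0 < m) (x : ℝ)
    (hx : 0 ≤ x) :
    |Hcdf k (m * x) - Hcdf k x| ≤ |m - 1| * Kconst k ^ 2 * max 1 m⁻¹ * Real.sqrt k := by
  rcases hx.eq_or_lt with rfl | hx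
  · simp only [mul_zero, sub_self, abs_zero]
    positivity
  rw [Hcdf_sub_Hcdf, mul_right_comm, mul_assoc _ (Kconst k ^ 2), Kconst_sq_mul_sqrt hk]
  refine abs_integral_scale_le hm hx fun t ht => ?_
  have ht : 0 < t := (lt_min hx (mul_pos hm hx)).trans ht.1
  rw [abs_of_nonneg (Hpdf_nonneg k ht.le), le_div_iff₀ ht, mul_comm]
  exact mul_Hpdf_le hk ht.le
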